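/- arXiv:2407.01079 — 7 statements merged into one kernel-verified Lean document; each statement's English description precedes it below -/
import Mathlib

section
/- Let B ∈ ℝ^{D×d₀} have orthonormal columns (BᵀB = I_{d₀}). Let p_h : ℝ^{d₀} → (0,∞) be a twice continuously differentiable probability density for which there exist constants A₀, A₁, A₂ > 0 such that p_h(h) ≤ (2π)^{-d₀/2} A₁ exp(−A₂‖h‖₂²/2) whenever ‖h‖₂ ≥ A₀. For t > 0 set β(t) = e^{-t/2} and σ(t) = 1 − e^{-t}, and for m ∈ ℕ let ψ_t^{(m)}(y | z) = (2πσ(t))^{-m/2} exp(−‖β(t)z − y‖₂²/(2σ(t))). Define p_t(x̄) = ∫_{ℝ^{d₀}} ψ_t^{(D)}(x̄ | Bh) p_h(h) dh for x̄ ∈ ℝ^D, and p_t^h(h̄) = ∫_{ℝ^{d₀}} ψ_t^{(d₀)}(h̄ | h) p_h(h) dh for h̄ ∈ ℝ^{d₀}. Then for every t > 0 and every x̄ ∈ ℝ^D, the score decomposes as ∇_{x̄} log p_t(x̄) = B ∇ log p_t^h(Bᵀx̄) − (1/σ(t)) (I_D − BBᵀ) x̄. -/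
/-!
Since `B` has orthonormal columns, `‖B h' - y‖² = ‖h' - Bᵀ y‖² + (‖y‖² - ‖Bᵀ y‖²)`, so the ambient
Gaussian kernel factors into a Gaussian in the normal component of `y` times the latent kernel
evaluated at `Bᵀ y`. Integrating against `p_h` gives
`p_t(y) = c · exp(-(‖y‖² - ‖Bᵀ y‖²) / (2σ)) · p_t^h(Bᵀ y)`, and the score is the gradient of the
logarithm of this product. The latent density `p_t^h` is positive because `p_h` is, and it is
differentiable by dominated differentiation, since `r ↦ r exp(-r²/(2σ))` is bounded.
-/

open Matrix MeasureTheory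

/-- The Gaussian transition kernel `ψ_t(y | z)` of the forward diffusion,
with `β(t) = e^{-t/2}` and `σ(t) = 1 - e^{-t}`. -/
noncomputable def gaussKernel (m : ℕ) (t : ℝ) (z y : EuclideanSpace ℝ (Fin m)) : ℝ :=
  (2 * Real.pi * (1 - Real.exp (-t))) ^ (-(m : ℝ) / 2) *
    Real.exp (-‖Real.exp (-t / 2) • z - y‖ ^ 2 / (2 * (1 - Real.exp (-t))))

section Gradient

variable {E : Type*} [NormedAddCommGroup E] [InnerProductSpace ℝ E] [CompleteSpace E]
  {f g : E → ℝ} {f' g' x : E}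

theorem HasGradientAt.add (hf : HasGradientAt f f' x) (hg : HasGradientAt g g' x) :
    HasGradientAt (fun y => f y + g y) (f' + g') x := by
  rw [hasGradientAt_iff_hasFDerivAt] at *
  rw [map_add]
  exact hf.add hg

theorem HasGradientAt.sub (hf : HasGradientAt f f' x) (hg : HasGradientAt g g' x) :
    HasGradientAt (fun y => f y - g y) (f' - g') x := by
  rw [hasGradientAt_iff_hasFDerivAt] at *
  rw [map_sub]
  exact hf.sub hg

theorem HasGradientAt.const_add (c : ℝ) (hf : HasGradientAt f f' x) :
    HasGradientAt (fun y => c + f y) f' x := by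
  rw [hasGradientAt_iff_hasFDerivAt] at *
  exact hf.const_add c

theorem HasGradientAt.const_mul (c : ℝ) (hf : HasGradientAt f f' x) :
    HasGradientAt (fun y => c * f y) (c • f') x := by
  rw [hasGradientAt_iff_hasFDerivAt] at *
  rw [map_smul]
  exact hf.const_mul c

theorem hasGradientAt_norm_sq (x : E) : HasGradientAt (fun y => ‖y‖ ^ 2) ((2 : ℝ) • x) x := by
  rw [hasGradientAt_iff_hasFDerivAt]
  refine (hasStrictFDerivAt_norm_sq x).hasFDerivAt.congr_fderiv ?_
  ext v
  simp

theorem HasGradientAt.comp_linearMap {F : Type*} [NormedAddCommGroup F] [InnerProductSpace ℝ F]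
    [FiniteDimensional ℝ E] [FiniteDimensional ℝ F] (A : F →ₗ[ℝ] E) {x : F}
    (hf : HasGradientAt f f' (A x)) : HasGradientAt (fun y => f (A y)) (A.adjoint f') x := by
  rw [hasGradientAt_iff_hasFDerivAt] at *
  refine (hf.comp x (LinearMap.toContinuousLinearMap A).hasFDerivAt).congr_fderiv ?_
  ext v
  simp [LinearMap.adjoint_inner_left]

end Gradient

theorem LinearMap.norm_sub_sq_eq_of_adjoint_apply_self {E F : Type*}
    [NormedAddCommGroup E] [InnerProductSpace ℝ E] [FiniteDimensional ℝ E]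
    [NormedAddCommGroup F] [InnerProductSpace ℝ F] [FiniteDimensional ℝ F]
    (L : E →ₗ[ℝ] F) (hL : ∀ c, L.adjoint (L c) = c) (c : E) (y : F) :
    ‖L c - y‖ ^ 2 = ‖c - L.adjoint y‖ ^ 2 + (‖y‖ ^ 2 - ‖L.adjoint y‖ ^ 2) := by
  have hnorm : ‖L c‖ ^ 2 = ‖c‖ ^ 2 := by
    rw [← real_inner_self_eq_norm_sq, ← real_inner_self_eq_norm_sq, ← L.adjoint_inner_left, hL]
  rw [norm_sub_sq_real, norm_sub_sq_real, hnorm, ← L.adjoint_inner_right]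
  ring

theorem Matrix.toEuclideanLin_transpose {m n : Type*} [Fintype m] [Fintype n] [DecidableEq m]
    [DecidableEq n] (B : Matrix m n ℝ) : Bᵀ.toEuclideanLin = B.toEuclideanLin.adjoint := by
  rw [← conjTranspose_eq_transpose_of_trivial, toEuclideanLin_conjTranspose_eq_adjoint]

theorem mul_exp_neg_sq_div_le {a : ℝ} (ha : 0 < a) (r : ℝ) :
    r * Real.exp (-r ^ 2 / a) ≤ a / 4 + 1 := by
  have hexp : 1 + r ^ 2 / a ≤ Real.exp (r ^ 2 / a) := by
    linarith [Real.add_one_le_exp (r ^ 2 / a)]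
  have hamgm : r ≤ a / 4 + r ^ 2 / a := by
    rw [← sub_nonneg]
    have : a / 4 + r ^ 2 / a - r = (r - a / 2) ^ 2 / a := by field_simp; ring
    rw [this]
    positivity
  have hu : 0 ≤ r ^ 2 / a := by positivity
  rw [neg_div, Real.exp_neg, ← div_eq_mul_inv, div_le_iff₀ (Real.exp_pos _)]
  nlinarith

section GaussKernel

variable {d : ℕ} {t : ℝ}

theorem one_sub_exp_neg_pos (ht : 0 < t) : 0 < 1 - Real.exp (-t) :=
  sub_pos.2 (Real.exp_lt_one_iff.2 (neg_neg_of_pos ht))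

theorem gaussKernel_pos (ht : 0 < t) (h z : EuclideanSpace ℝ (Fin d)) :
    0 < gaussKernel d t h z := by
  have := one_sub_exp_neg_pos ht
  unfold gaussKernel
  positivity

theorem gaussKernel_le (ht : 0 < t) (h z : EuclideanSpace ℝ (Fin d)) :
    gaussKernel d t h z ≤ (2 * Real.pi * (1 - Real.exp (-t))) ^ (-(d : ℝ) / 2) := by
  have := one_sub_exp_neg_pos ht
  refine mul_le_of_le_one_right (by positivity) (Real.exp_le_one_iff.2 ?_)
  exact div_nonpos_of_nonpos_of_nonneg (neg_nonpos.2 (sq_nonneg _)) (by positivity)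

theorem gaussKernel_mul_norm_le (ht : 0 < t) (h z : EuclideanSpace ℝ (Fin d)) :
    gaussKernel d t h z * ‖Real.exp (-t / 2) • h - z‖
      ≤ (2 * Real.pi * (1 - Real.exp (-t))) ^ (-(d : ℝ) / 2) * ((1 - Real.exp (-t)) / 2 + 1) := by
  have hσ := one_sub_exp_neg_pos ht
  have := mul_exp_neg_sq_div_le (by positivity : 0 < 2 * (1 - Real.exp (-t)))
    ‖Real.exp (-t / 2) • h - z‖
  unfold gaussKernel
  rw [mul_assoc, mul_comm (Real.exp _)]
  exact mul_le_mul_of_nonneg_left (this.trans_eq (by ring)) (by positivity)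

theorem continuous_gaussKernel (t : ℝ) (z : EuclideanSpace ℝ (Fin d)) :
    Continuous fun h => gaussKernel d t h z := by
  unfold gaussKernel
  fun_prop

theorem hasFDerivAt_gaussKernel (h z : EuclideanSpace ℝ (Fin d)) :
    HasFDerivAt (gaussKernel d t h)
      ((gaussKernel d t h z / (1 - Real.exp (-t))) • innerSL ℝ (Real.exp (-t / 2) • h - z)) z := by
  have hq : HasFDerivAt
      (fun w => -‖Real.exp (-t / 2) • h - w‖ ^ 2 / (2 * (1 - Real.exp (-t)))) _ z :=
    ((hasFDerivAt_id z).const_sub (Real.exp (-t / 2) • h)).norm_sq.neg.mul_const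
      (2 * (1 - Real.exp (-t)))⁻¹
  refine (hq.exp.const_mul
    ((2 * Real.pi * (1 - Real.exp (-t))) ^ (-(d : ℝ) / 2))).congr_fderiv ?_
  ext v
  simp [gaussKernel]
  ring

end GaussKernel

theorem gaussKernel_map_eq_mul {D d₀ : ℕ} {t : ℝ} (ht : 0 < t)
    (L : EuclideanSpace ℝ (Fin d₀) →ₗ[ℝ] EuclideanSpace ℝ (Fin D)) (hL : ∀ c, L.adjoint (L c) = c)
    (h : EuclideanSpace ℝ (Fin d₀)) (y : EuclideanSpace ℝ (Fin D)) :
    gaussKernel D t (L h) y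
      = (2 * Real.pi * (1 - Real.exp (-t))) ^ (-((D : ℝ) - d₀) / 2) *
          Real.exp (-(‖y‖ ^ 2 - ‖L.adjoint y‖ ^ 2) / (2 * (1 - Real.exp (-t)))) *
        gaussKernel d₀ t h (L.adjoint y) := by
  have := one_sub_exp_neg_pos ht
  have hpow : (2 * Real.pi * (1 - Real.exp (-t))) ^ (-(D : ℝ) / 2)
      = (2 * Real.pi * (1 - Real.exp (-t))) ^ (-((D : ℝ) - d₀) / 2) *
        (2 * Real.pi * (1 - Real.exp (-t))) ^ (-(d₀ : ℝ) / 2) := by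
    rw [← Real.rpow_add (by positivity)]
    ring_nf
  unfold gaussKernel
  rw [← map_smul, L.norm_sub_sq_eq_of_adjoint_apply_self hL, neg_add, add_div, Real.exp_add, hpow]
  ring

/-- The paper's `p_t^h` when `f = p_h`. -/
noncomputable def forwardDensity (d : ℕ) (t : ℝ) (f : EuclideanSpace ℝ (Fin d) → ℝ)
    (z : EuclideanSpace ℝ (Fin d)) : ℝ :=
  ∫ h, gaussKernel d t h z * f h

section ForwardDensity

variable {d : ℕ} {t : ℝ} {f : EuclideanSpace ℝ (Fin d) → ℝ}

theorem integrable_gaussKernel_mul (ht : 0 < t) (hf : Integrable f)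
    (z : EuclideanSpace ℝ (Fin d)) :
    Integrable fun h => gaussKernel d t h z * f h :=
  hf.bdd_mul (continuous_gaussKernel t z).aestronglyMeasurable <| ae_of_all _ fun h => by
    rw [Real.norm_of_nonneg (gaussKernel_pos ht h z).le]
    exact gaussKernel_le ht h z

theorem forwardDensity_pos (ht : 0 < t) (hf : Integrable f) (hpos : ∀ h, 0 < f h)
    (z : EuclideanSpace ℝ (Fin d)) : 0 < forwardDensity d t f z := by
  have hprod h : 0 < gaussKernel d t h z * f h := mul_pos (gaussKernel_pos ht h z) (hpos h)
  rw [forwardDensity, integral_pos_iff_support_of_nonneg (fun h => (hprod h).le)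
    (integrable_gaussKernel_mul ht hf z)]
  simp [Function.support, (hprod _).ne', NeZero.ne]

theorem differentiableAt_forwardDensity (ht : 0 < t) (hf : Integrable f)
    (z₀ : EuclideanSpace ℝ (Fin d)) : DifferentiableAt ℝ (forwardDensity d t f) z₀ := by
  have hσ := one_sub_exp_neg_pos ht
  set C := (2 * Real.pi * (1 - Real.exp (-t))) ^ (-(d : ℝ) / 2)
  have hbound h z : ‖f h • ((gaussKernel d t h z / (1 - Real.exp (-t))) •
      innerSL ℝ (Real.exp (-t / 2) • h - z))‖
      ≤ C * ((1 - Real.exp (-t)) / 2 + 1) / (1 - Real.exp (-t)) * ‖f h‖ := by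
    rw [norm_smul, norm_smul, innerSL_apply_norm, Real.norm_of_nonneg
      (div_nonneg (gaussKernel_pos ht h z).le hσ.le)]
    calc ‖f h‖ * (gaussKernel d t h z / (1 - Real.exp (-t)) * ‖Real.exp (-t / 2) • h - z‖)
        = gaussKernel d t h z * ‖Real.exp (-t / 2) • h - z‖ / (1 - Real.exp (-t)) * ‖f h‖ := by
          ring
      _ ≤ _ := by grw [gaussKernel_mul_norm_le ht h z]
  have hmeas : AEStronglyMeasurable (fun h => f h • ((gaussKernel d t h z₀ /
      (1 - Real.exp (-t))) • innerSL ℝ (Real.exp (-t / 2) • h - z₀))) :=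
    hf.1.smul (((continuous_gaussKernel t z₀).div_const _).smul
      ((innerSL ℝ).continuous.comp (by fun_prop))).aestronglyMeasurable
  exact (hasFDerivAt_integral_of_dominated_of_fderiv_le Filter.univ_mem
    (.of_forall fun z => (integrable_gaussKernel_mul ht hf z).aestronglyMeasurable)
    (integrable_gaussKernel_mul ht hf z₀) hmeas (ae_of_all _ fun h z _ => hbound h z)
    (hf.norm.const_mul _)
    (ae_of_all _ fun h z _ => (hasFDerivAt_gaussKernel h z).mul_const (f h))).differentiableAt

end ForwardDensity

theorem hasGradientAt_log_integral_gaussKernel_map {D d₀ : ℕ} {t : ℝ} (ht : 0 < t)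
    (L : EuclideanSpace ℝ (Fin d₀) →ₗ[ℝ] EuclideanSpace ℝ (Fin D)) (hL : ∀ c, L.adjoint (L c) = c)
    {f : EuclideanSpace ℝ (Fin d₀) → ℝ} (hf : Integrable f) (hpos : ∀ h, 0 < f h)
    (x : EuclideanSpace ℝ (Fin D)) :
    HasGradientAt (fun y => Real.log (∫ h, gaussKernel D t (L h) y * f h))
      (L (gradient (fun z => Real.log (forwardDensity d₀ t f z)) (L.adjoint x))
        - (1 / (1 - Real.exp (-t))) • (x - L (L.adjoint x))) x := by
  have hσ := one_sub_exp_neg_pos ht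
  set c := (2 * Real.pi * (1 - Real.exp (-t))) ^ (-((D : ℝ) - d₀) / 2)
  have hc : 0 < c := by positivity
  have hlog : (fun y => Real.log (∫ h, gaussKernel D t (L h) y * f h))
      = fun y => Real.log c + (-1 / (2 * (1 - Real.exp (-t))) * (‖y‖ ^ 2 - ‖L.adjoint y‖ ^ 2)
        + Real.log (forwardDensity d₀ t f (L.adjoint y))) := by
    funext y
    have hker h : gaussKernel D t (L h) y * f h
        = c * Real.exp (-(‖y‖ ^ 2 - ‖L.adjoint y‖ ^ 2) / (2 * (1 - Real.exp (-t))))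
          * (gaussKernel d₀ t h (L.adjoint y) * f h) := by
      rw [gaussKernel_map_eq_mul ht L hL]
      ring
    simp_rw [hker, integral_const_mul]
    rw [← forwardDensity, Real.log_mul (by positivity) (forwardDensity_pos ht hf hpos _).ne',
      Real.log_mul hc.ne' (Real.exp_pos _).ne', Real.log_exp]
    ring
  have hG := ((differentiableAt_forwardDensity ht hf (L.adjoint x)).log
    (forwardDensity_pos ht hf hpos _).ne').hasGradientAt
  have hsq : HasGradientAt (fun y => ‖y‖ ^ 2 - ‖L.adjoint y‖ ^ 2)
      ((2 : ℝ) • x - L ((2 : ℝ) • L.adjoint x)) x := by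
    simpa only [LinearMap.adjoint_adjoint] using
      (hasGradientAt_norm_sq x).sub ((hasGradientAt_norm_sq _).comp_linearMap L.adjoint)
  rw [hlog]
  convert ((hsq.const_mul _).add (hG.comp_linearMap L.adjoint)).const_add (Real.log c) using 1
  rw [LinearMap.adjoint_adjoint, map_smul]
  generalize 1 - Real.exp (-t) = σ
  module

theorem score_decomposition_general
    (D d₀ : ℕ) (B : Matrix (Fin D) (Fin d₀) ℝ) (hB : Bᵀ * B = 1)
    (ph : EuclideanSpace ℝ (Fin d₀) → ℝ)
    (hpos : ∀ h, 0 < ph h)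
    (hdens : (∫ h, ph h) = 1)
    (t : ℝ) (ht : 0 < t) (x : EuclideanSpace ℝ (Fin D)) :
    gradient
        (fun y : EuclideanSpace ℝ (Fin D) =>
          Real.log (∫ h : EuclideanSpace ℝ (Fin d₀),
            gaussKernel D t (Matrix.toEuclideanLin B h) y * ph h)) x
      = Matrix.toEuclideanLin B
          (gradient
            (fun z : EuclideanSpace ℝ (Fin d₀) =>
              Real.log (∫ h : EuclideanSpace ℝ (Fin d₀), gaussKernel d₀ t h z * ph h))
            (Matrix.toEuclideanLin Bᵀ x))
        - (1 / (1 - Real.exp (-t))) • (x - Matrix.toEuclideanLin (B * Bᵀ) x) := by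
  have hint : Integrable ph := .of_integral_ne_zero (by rw [hdens]; exact one_ne_zero)
  have hL c : B.toEuclideanLin.adjoint (B.toEuclideanLin c) = c := by
    rw [← toEuclideanLin_transpose, ← LinearMap.comp_apply, ← toLpLin_mul_same, hB, toLpLin_one,
      LinearMap.id_apply]
  simp only [toLpLin_mul_same, LinearMap.comp_apply, toEuclideanLin_transpose]
  exact (hasGradientAt_log_integral_gaussKernel_map ht _ hL hint hpos x).gradient

/-- Score decomposition for data supported on a low-dimensional linear subspace:
`∇ log p_t(x̄) = B ∇ log p_t^h(Bᵀ x̄) − (1/σ(t)) (I − B Bᵀ) x̄`. -/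
theorem score_decomposition
    (D d₀ : ℕ) (B : Matrix (Fin D) (Fin d₀) ℝ) (hB : Bᵀ * B = 1)
    (ph : EuclideanSpace ℝ (Fin d₀) → ℝ)
    (hpos : ∀ h, 0 < ph h) (hC2 : ContDiff ℝ 2 ph)
    (hdens : (∫ h, ph h) = 1)
    (A₀ A₁ A₂ : ℝ) (hA₀ : 0 < A₀) (hA₁ : 0 < A₁) (hA₂ : 0 < A₂)
    (htail : ∀ h : EuclideanSpace ℝ (Fin d₀), A₀ ≤ ‖h‖ →
      ph h ≤ (2 * Real.pi) ^ (-(d₀ : ℝ) / 2) * A₁ * Real.exp (-A₂ * ‖h‖ ^ 2 / 2))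
    (t : ℝ) (ht : 0 < t) (x : EuclideanSpace ℝ (Fin D)) :
    gradient
        (fun y : EuclideanSpace ℝ (Fin D) =>
          Real.log (∫ h : EuclideanSpace ℝ (Fin d₀),
            gaussKernel D t (Matrix.toEuclideanLin B h) y * ph h)) x
      = Matrix.toEuclideanLin B
          (gradient
            (fun z : EuclideanSpace ℝ (Fin d₀) =>
              Real.log (∫ h : EuclideanSpace ℝ (Fin d₀), gaussKernel d₀ t h z * ph h))
            (Matrix.toEuclideanLin Bᵀ x))
        - (1 / (1 - Real.exp (-t))) • (x - Matrix.toEuclideanLin (B * Bᵀ) x) :=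
  score_decomposition_general D d₀ B hB ph hpos hdens t ht x
end

section
/- Let d₀ ≥ 1 be an integer, C > 0, and r > 0 with C r² ≥ 2 d₀. Then ∫_{{h ∈ ℝ^{d₀} : ‖h‖₂ > r}} exp(−C‖h‖₂²/2) dh ≤ (2 d₀ π^{d₀/2} / (C Γ(d₀/2 + 1))) · r^{d₀−2} · exp(−C r²/2). -/
/-!
In polar coordinates the integral is `d₀ · vol(B₁) · ∫_r^∞ y^{d₀-1} e^{-Cy²/2} dy`. Split
`e^{-Cy²/2} = e^{-Cy²/4} · e^{-Cy²/4}`: the factor `y^{d₀-2} e^{-Cy²/4}` is decreasing once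
`Cy² ≥ 2(d₀-2)`, so for `y > r` it is at most its value at `r`, and the remaining
`∫_r^∞ y e^{-Cy²/4} dy = (2/C) e^{-Cr²/4}` is explicit. Finally `d₀ · vol(B₁)` is evaluated with
`vol(B₁) = π^{d₀/2} / Γ(d₀/2 + 1)`.
-/

open MeasureTheory Real Set Module

theorem setIntegral_lt_norm_fun_norm_addHaar {E F : Type*} [NormedAddCommGroup E]
    [NormedSpace ℝ E] [FiniteDimensional ℝ E] [Nontrivial E] [MeasurableSpace E] [BorelSpace E]
    [NormedAddCommGroup F] [NormedSpace ℝ F] (μ : Measure E) [μ.IsAddHaarMeasure]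
    (f : ℝ → F) {r : ℝ} (hr : 0 ≤ r) :
    ∫ x in {x | r < ‖x‖}, f ‖x‖ ∂μ
      = finrank ℝ E • μ.real (Metric.ball 0 1) • ∫ y in Ioi r, y ^ (finrank ℝ E - 1) • f y := by
  have hcomp : {x : E | r < ‖x‖}.indicator (fun x ↦ f ‖x‖) = fun x ↦ (Ioi r).indicator f ‖x‖ :=
    funext fun x ↦ indicator_comp_right (s := Ioi r) norm
  rw [← integral_indicator (measurableSet_lt measurable_const measurable_norm), hcomp,
    integral_fun_norm_addHaar]
  simp_rw [← indicator_smul_apply (Ioi r) (fun y : ℝ ↦ y ^ (finrank ℝ E - 1))]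
  rw [setIntegral_indicator measurableSet_Ioi, Ioi_inter_Ioi, max_eq_right hr]

theorem volume_real_ball_zero_one {E : Type*} [NormedAddCommGroup E] [InnerProductSpace ℝ E]
    [FiniteDimensional ℝ E] [Nontrivial E] [MeasurableSpace E] [BorelSpace E] :
    volume.real (Metric.ball (0 : E) 1)
      = π ^ ((finrank ℝ E : ℝ) / 2) / Gamma ((finrank ℝ E : ℝ) / 2 + 1) := by
  rw [measureReal_def, InnerProductSpace.volume_ball, ENNReal.ofReal_one, one_pow, one_mul,
    ENNReal.toReal_ofReal (by positivity), sqrt_eq_rpow, ← rpow_mul_natCast pi_pos.le]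
  ring_nf

theorem integral_Ioi_mul_exp_neg_mul_sq {b : ℝ} (hb : 0 < b) (a : ℝ) :
    ∫ y in Ioi a, y * exp (-b * y ^ 2) = exp (-b * a ^ 2) / (2 * b) := by
  have hderiv (y : ℝ) :
      HasDerivAt (fun y ↦ -(exp (-b * y ^ 2) / (2 * b))) (y * exp (-b * y ^ 2)) y := by
    refine ((((hasDerivAt_pow 2 y).const_mul (-b)).exp).div_const (2 * b)).neg.congr_deriv ?_
    field_simp
    ring
  have hlim : Filter.Tendsto (fun y ↦ -(exp (-b * y ^ 2) / (2 * b))) Filter.atTop (nhds 0) := by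
    have := tendsto_exp_atBot.comp <|
      (Filter.tendsto_const_mul_atBot_of_neg (neg_neg_of_pos hb)).2
        (Filter.tendsto_pow_atTop two_ne_zero)
    simpa using (this.div_const (2 * b)).neg
  rw [integral_Ioi_of_hasDerivAt_of_tendsto' (fun y _ ↦ hderiv y)
    (integrable_mul_exp_neg_mul_sq hb).integrableOn hlim]
  ring

theorem rpow_mul_exp_neg_mul_sq_le {b r y s : ℝ} (hb : 0 ≤ b) (hr : 0 < r) (hry : r ≤ y)
    (hs : s ≤ 2 * b * r ^ 2) : y ^ s * exp (-b * y ^ 2) ≤ r ^ s * exp (-b * r ^ 2) := by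
  have hy : 0 < y := hr.trans_le hry
  have hlog : s * log (y / r) ≤ b * (y ^ 2 - r ^ 2) :=
    calc s * log (y / r) ≤ 2 * b * r ^ 2 * log (y / r) :=
          mul_le_mul_of_nonneg_right hs (log_nonneg ((one_le_div hr).2 hry))
      _ = b * r ^ 2 * log ((y / r) ^ 2) := by rw [log_pow]; push_cast; ring
      _ ≤ b * r ^ 2 * ((y / r) ^ 2 - 1) := by gcongr; exact log_le_sub_one_of_pos (by positivity)
      _ = b * (y ^ 2 - r ^ 2) := by field_simp
  calc y ^ s * exp (-b * y ^ 2) = r ^ s * exp (s * log (y / r)) * exp (-b * y ^ 2) := by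
        rw [mul_comm s, ← rpow_def_of_pos (div_pos hy hr), div_rpow hy.le hr.le,
          mul_div_cancel₀ _ (rpow_pos_of_pos hr s).ne']
    _ ≤ r ^ s * exp (b * (y ^ 2 - r ^ 2)) * exp (-b * y ^ 2) := by gcongr
    _ = r ^ s * exp (-b * r ^ 2) := by rw [mul_assoc, ← exp_add]; ring_nf

theorem integral_Ioi_pow_mul_exp_neg_mul_sq_le {b r : ℝ} (hb : 0 < b) (hr : 0 < r) {n : ℕ}
    (hn : (n : ℝ) - 1 ≤ b * r ^ 2) :
    ∫ y in Ioi r, y ^ n * exp (-b * y ^ 2) ≤ r ^ ((n : ℝ) - 1) * exp (-b * r ^ 2) / b := by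
  let K := r ^ ((n : ℝ) - 1) * exp (-(b / 2) * r ^ 2)
  have hsplit (y : ℝ) : exp (-b * y ^ 2) = exp (-(b / 2) * y ^ 2) * exp (-(b / 2) * y ^ 2) := by
    rw [← exp_add]; ring_nf
  have hpointwise : ∀ y ∈ Ioi r, y ^ n * exp (-b * y ^ 2) ≤ K * (y * exp (-(b / 2) * y ^ 2)) := by
    intro y hy
    have hy0 : 0 < y := hr.trans hy
    calc y ^ n * exp (-b * y ^ 2)
        = y ^ ((n : ℝ) - 1) * exp (-(b / 2) * y ^ 2) * (y * exp (-(b / 2) * y ^ 2)) := by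
          rw [rpow_sub_one hy0.ne', rpow_natCast, hsplit]; field_simp
      _ ≤ K * (y * exp (-(b / 2) * y ^ 2)) := by
          gcongr
          exact rpow_mul_exp_neg_mul_sq_le (half_pos hb).le hr hy.le (by linarith)
  calc ∫ y in Ioi r, y ^ n * exp (-b * y ^ 2)
      ≤ ∫ y in Ioi r, K * (y * exp (-(b / 2) * y ^ 2)) := by
        refine integral_mono_of_nonneg ?_
          (((integrable_mul_exp_neg_mul_sq (half_pos hb)).const_mul K).integrableOn) ?_
        · filter_upwards [ae_restrict_mem measurableSet_Ioi] with y hy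
          have : 0 < y := hr.trans hy
          positivity
        · exact (ae_restrict_mem measurableSet_Ioi).mono hpointwise
    _ = K * (exp (-(b / 2) * r ^ 2) / (2 * (b / 2))) := by
        rw [integral_const_mul, integral_Ioi_mul_exp_neg_mul_sq (half_pos hb)]
    _ = r ^ ((n : ℝ) - 1) * exp (-b * r ^ 2) / b := by
        simp only [K]; rw [hsplit r]; field_simp

/-- Gaussian tail integral bound: for `C r² ≥ 2 d₀`,
`∫_{‖h‖ > r} exp(−C‖h‖²/2) dh ≤ (2 d₀ π^{d₀/2} / (C Γ(d₀/2 + 1))) r^{d₀−2} exp(−C r²/2)`. -/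
theorem gaussian_tail_integral_bound
    (d₀ : ℕ) (hd₀ : 1 ≤ d₀) (C r : ℝ) (hC : 0 < C) (hr : 0 < r)
    (hCr : 2 * (d₀ : ℝ) ≤ C * r ^ 2) :
    (∫ h in {h : EuclideanSpace ℝ (Fin d₀) | r < ‖h‖}, Real.exp (-C * ‖h‖ ^ 2 / 2))
      ≤ 2 * (d₀ : ℝ) * Real.pi ^ ((d₀ : ℝ) / 2) / (C * Real.Gamma ((d₀ : ℝ) / 2 + 1))
          * r ^ ((d₀ : ℝ) - 2) * Real.exp (-C * r ^ 2 / 2) := by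
  have : Nontrivial (EuclideanSpace ℝ (Fin d₀)) :=
    Module.nontrivial_of_finrank_pos (by rw [finrank_euclideanSpace_fin]; omega)
  have hexp (y : ℝ) : exp (-C * y ^ 2 / 2) = exp (-(C / 2) * y ^ 2) := by ring_nf
  have hexponent : ((d₀ - 1 : ℕ) : ℝ) - 1 = d₀ - 2 := by rw [Nat.cast_sub hd₀]; ring
  have hradial := integral_Ioi_pow_mul_exp_neg_mul_sq_le (half_pos hC) hr (n := d₀ - 1)
    (by rw [hexponent]; linarith)
  rw [hexponent] at hradial
  rw [setIntegral_lt_norm_fun_norm_addHaar volume (fun y ↦ exp (-C * y ^ 2 / 2)) hr.le,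
    volume_real_ball_zero_one, finrank_euclideanSpace_fin]
  simp only [nsmul_eq_mul, smul_eq_mul, hexp]
  calc _ ≤ (d₀ : ℝ) * (π ^ ((d₀ : ℝ) / 2) / Gamma ((d₀ : ℝ) / 2 + 1)
          * (r ^ ((d₀ : ℝ) - 2) * exp (-(C / 2) * r ^ 2) / (C / 2))) := by gcongr
    _ = _ := by field_simp
end

section
/- Let m ≥ 1 be an integer and δ := 1/m. Define ζ : ℝ → ℝ by ζ(t) = −t if 0 ≤ t < δ and ζ(t) = 0 otherwise, and for k = 0, 1, …, m−1 define φ_k : ℝ → ℝ by φ_k(x) = x + ζ(x − kδ). Then the composition φ_{m−1} ∘ φ_{m−2} ∘ ⋯ ∘ φ_0 satisfies: (φ_{m−1} ∘ ⋯ ∘ φ_0)(x) = δ·⌊x/δ⌋ for every x ∈ [0,1), and (φ_{m−1} ∘ ⋯ ∘ φ_0)(x) = x for every x with x < 0 or x ≥ 1. -/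
/-!
Layer `φ_k` moves exactly the points of the cell `[kδ, (k+1)δ)` to its left endpoint `kδ` and
fixes every other point. Applying `φ_0, …, φ_{n-1}` in turn, a point `x ∈ [0, nδ)` stays put
until it reaches the layer of its own cell `k = ⌊x/δ⌋`, is sent to `kδ`, and then stays put
again, because `kδ` lies to the left of all later cells. A point outside `[0, nδ)` lies in no
cell and is never moved.
-/

/-- The piecewise-linear activation `ζ` used in the quantization feed-forward layers. -/
noncomputable def quantZeta (δ t : ℝ) : ℝ := if 0 ≤ t ∧ t < δ then -t else 0

/-- The `k`-th quantization feed-forward layer `φ_k(x) = x + ζ(x − kδ)`. -/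
noncomputable def quantPhi (δ : ℝ) (k : ℕ) (x : ℝ) : ℝ := x + quantZeta δ (x - k * δ)

/-- The composition `φ_{m−1} ∘ ⋯ ∘ φ_0`. -/
noncomputable def quantize (δ : ℝ) (m : ℕ) (x : ℝ) : ℝ :=
  (List.range m).foldl (fun y k => quantPhi δ k y) x

open Set

lemma quantZeta_of_notMem {δ t : ℝ} (ht : t ∉ Ico 0 δ) : quantZeta δ t = 0 :=
  if_neg ht

lemma quantPhi_of_notMem {δ x : ℝ} {k : ℕ} (hx : x ∉ Ico (k * δ) ((k + 1) * δ)) :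
    quantPhi δ k x = x := by
  rw [quantPhi, quantZeta_of_notMem, add_zero]
  rintro ⟨h₀, h₁⟩
  exact hx ⟨by linarith, by linarith⟩

lemma quantPhi_of_mem {δ x : ℝ} {k : ℕ} (hx : x ∈ Ico (k * δ) ((k + 1) * δ)) :
    quantPhi δ k x = k * δ := by
  have hζ : 0 ≤ x - k * δ ∧ x - k * δ < δ := ⟨by linarith [hx.1], by linarith [hx.2]⟩
  rw [quantPhi, quantZeta, if_pos hζ]
  ring

lemma quantize_succ (δ : ℝ) (n : ℕ) (x : ℝ) :
    quantize δ (n + 1) x = quantPhi δ n (quantize δ n x) := by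
  simp [quantize, List.range_succ]

lemma floor_div_eq_of_mem_Ico {δ x : ℝ} (hδ : 0 < δ) {k : ℕ}
    (hx : x ∈ Ico (k * δ) ((k + 1) * δ)) : ⌊x / δ⌋ = k := by
  rw [Int.floor_eq_iff, le_div_iff₀ hδ, div_lt_iff₀ hδ]
  exact_mod_cast hx

lemma mul_floor_div_le {δ : ℝ} (hδ : 0 < δ) (x : ℝ) : δ * ⌊x / δ⌋ ≤ x := by
  rw [mul_comm, ← le_div_iff₀ hδ]
  exact Int.floor_le _

lemma quantize_eq_self {δ x : ℝ} (hδ : 0 < δ) {n : ℕ} (hx : x < 0 ∨ n * δ ≤ x) :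
    quantize δ n x = x := by
  induction n with
  | zero => rfl
  | succ n ih =>
    push_cast at hx
    have hx' : x < 0 ∨ n * δ ≤ x := hx.imp_right fun h => by linarith
    rw [quantize_succ, ih hx', quantPhi_of_notMem]
    rintro ⟨h₀, h₁⟩
    rcases hx with h | h
    · linarith [mul_nonneg n.cast_nonneg hδ.le]
    · linarith

lemma quantize_eq_mul_floor {δ x : ℝ} (hδ : 0 < δ) {n : ℕ} (hx : x ∈ Ico 0 (n * δ)) :
    quantize δ n x = δ * ⌊x / δ⌋ := by
  induction n with
  | zero => simp at hx
  | succ n ih =>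
    rw [quantize_succ]
    by_cases hlt : x < n * δ
    · rw [ih ⟨hx.1, hlt⟩, quantPhi_of_notMem]
      rintro ⟨h₀, -⟩
      linarith [mul_floor_div_le hδ x]
    · have hcell : x ∈ Ico (n * δ) ((n + 1) * δ) := ⟨not_lt.mp hlt, by exact_mod_cast hx.2⟩
      rw [quantize_eq_self hδ (Or.inr hcell.1), quantPhi_of_mem hcell,
        floor_div_eq_of_mem_Ico hδ hcell, Int.cast_natCast, mul_comm]

/-- The stacked feed-forward layers quantize `[0,1)` onto the grid `{0, δ, …, 1−δ}` with
`δ = 1/m`, and act as the identity outside `[0,1)`. -/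
theorem quantization_layers_spec (m : ℕ) (hm : 1 ≤ m) :
    (∀ x : ℝ, 0 ≤ x → x < 1 →
        quantize (1 / (m : ℝ)) m x = (1 / (m : ℝ)) * (⌊x / (1 / (m : ℝ))⌋ : ℝ)) ∧
    (∀ x : ℝ, (x < 0 ∨ 1 ≤ x) → quantize (1 / (m : ℝ)) m x = x) := by
  have hm₀ : (0 : ℝ) < m := by exact_mod_cast hm
  have hδ : 0 < 1 / (m : ℝ) := one_div_pos.mpr hm₀
  have hmδ : (m : ℝ) * (1 / m) = 1 := mul_one_div_cancel hm₀.ne'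
  refine ⟨fun x hx₀ hx₁ => quantize_eq_mul_floor hδ ⟨hx₀, ?_⟩, fun x hx => quantize_eq_self hδ ?_⟩
  · rwa [hmδ]
  · rwa [hmδ]
end

section
/- Let δ ∈ (0,1), d ≥ 1, L ≥ 2, and let g₁ < g₂ < ⋯ < g_L be real numbers. For 1 ≤ j ≤ L define g̃_j := g_j + Σ_{k=1}^{j−1} δ^{−kd}(g_{j−k} − g_{j−k+1}) + δ^{−jd}(g_L − g₁). Then g̃_{j−1} < g̃_j for every 2 ≤ j ≤ L. -/
open BigOperators

/-- The shifted value `g̃_j = g_j + Σ_{k=1}^{j−1} δ^{−kd}(g_{j−k} − g_{j−k+1}) + δ^{−jd}(g_L − g₁)`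
produced by the selective shift operations. -/
noncomputable def shiftedVal (δ : ℝ) (d L : ℕ) (g : ℕ → ℝ) (j : ℕ) : ℝ :=
  g j + (∑ k ∈ Finset.Icc 1 (j - 1), δ ^ (-((k * d : ℕ) : ℤ)) * (g (j - k) - g (j - k + 1)))
    + δ ^ (-((j * d : ℕ) : ℤ)) * (g L - g 1)

/-!
Write `a = δ^{-d} > 1` and `h_j = g̃_j - g_j`. Regrouping the sum gives the recursion
`h_{j+1} = a (h_j - (g_{j+1} - g_j))`, hence `g̃_{j+1} - g̃_j = (a - 1)(h_j - (g_{j+1} - g_j))`.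
Bounding every weight `a^{j-i}` by `a^j` and `g_L - g_1` from below by `g_{j+1} - g_1` shows
`h_j ≥ a^j (g_{j+1} - g_j) > g_{j+1} - g_j`.
-/

open Finset

section ShiftExcess

variable (a S : ℝ) (g : ℕ → ℝ)

/-- `g̃_j - g_j`, with `a = δ^{-d}`, `S = g_L - g_1`, and the sum reindexed by `i = j - k`. -/
def shiftExcess (j : ℕ) : ℝ :=
  a ^ j * S - ∑ i ∈ Ico 1 j, a ^ (j - i) * (g (i + 1) - g i)

lemma shiftExcess_succ {j : ℕ} (hj : 1 ≤ j) :
    shiftExcess a S g (j + 1) = a * (shiftExcess a S g j - (g (j + 1) - g j)) := by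
  have hsum : ∑ i ∈ Ico 1 (j + 1), a ^ (j + 1 - i) * (g (i + 1) - g i)
      = a * ∑ i ∈ Ico 1 j, a ^ (j - i) * (g (i + 1) - g i) + a * (g (j + 1) - g j) := by
    rw [sum_Ico_succ_top hj, Nat.add_sub_cancel_left, pow_one, mul_sum]
    congr 1
    refine sum_congr rfl fun i hi => ?_
    rw [Nat.sub_add_comm (mem_Ico.1 hi).2.le, pow_succ]
    ring
  rw [shiftExcess, shiftExcess, hsum, pow_succ]
  ring

variable {a g}

lemma sub_lt_shiftExcess {L j : ℕ} (ha : 1 < a) (hg : ∀ i, 1 ≤ i → i < L → g i < g (i + 1))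
    (hj : 1 ≤ j) (hjL : j < L) :
    g (j + 1) - g j < shiftExcess a (g L - g 1) g j := by
  have hΔ : ∀ i ∈ Ico 1 L, 0 ≤ g (i + 1) - g i := fun i hi =>
    sub_nonneg.2 (hg i (mem_Ico.1 hi).1 (mem_Ico.1 hi).2).le
  calc g (j + 1) - g j
      < a ^ j * (g (j + 1) - g j) :=
        lt_mul_left (sub_pos.2 (hg j hj hjL)) (one_lt_pow₀ ha (by omega))
    _ = a ^ j * ∑ i ∈ Ico 1 (j + 1), (g (i + 1) - g i)
          - ∑ i ∈ Ico 1 j, a ^ j * (g (i + 1) - g i) := by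
        rw [sum_Ico_succ_top hj, mul_add, mul_sum]
        ring
    _ ≤ a ^ j * ∑ i ∈ Ico 1 L, (g (i + 1) - g i)
          - ∑ i ∈ Ico 1 j, a ^ (j - i) * (g (i + 1) - g i) := by
        refine sub_le_sub (mul_le_mul_of_nonneg_left ?_ (pow_nonneg (zero_le_one.trans ha.le) j))
          (sum_le_sum fun i hi => ?_)
        · exact sum_le_sum_of_subset_of_nonneg (Ico_subset_Ico_right hjL) fun i hi _ => hΔ i hi
        · exact mul_le_mul_of_nonneg_right (pow_le_pow_right₀ ha.le (Nat.sub_le j i))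
            (hΔ i (Ico_subset_Ico_right hjL.le hi))
    _ = shiftExcess a (g L - g 1) g j := by
        rw [shiftExcess, sum_Ico_sub g (by omega)]

end ShiftExcess

lemma zpow_neg_natCast_mul {α : Type*} [DivisionMonoid α] (x : α) (k d : ℕ) :
    x ^ (-((k * d : ℕ) : ℤ)) = (x ^ (-(d : ℤ))) ^ k := by
  rw [← zpow_natCast (x ^ (-(d : ℤ))) k, ← zpow_mul]
  push_cast
  ring_nf

lemma one_lt_zpow_neg {x : ℝ} (hx0 : 0 < x) (hx1 : x < 1) {d : ℕ} (hd : 1 ≤ d) :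
    1 < x ^ (-(d : ℤ)) := by
  rw [zpow_neg, zpow_natCast]
  exact one_lt_inv₀ (pow_pos hx0 d) |>.2 (pow_lt_one₀ hx0.le hx1 (by omega))

lemma shiftedVal_eq_add_shiftExcess (δ : ℝ) (d L : ℕ) (g : ℕ → ℝ) (j : ℕ) :
    shiftedVal δ d L g j = g j + shiftExcess (δ ^ (-(d : ℤ))) (g L - g 1) g j := by
  have hsum : ∑ k ∈ Icc 1 (j - 1), δ ^ (-((k * d : ℕ) : ℤ)) * (g (j - k) - g (j - k + 1))
      = -∑ i ∈ Ico 1 j, (δ ^ (-(d : ℤ))) ^ (j - i) * (g (i + 1) - g i) := by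
    rw [← sum_neg_distrib]
    refine sum_nbij' (j - ·) (j - ·) ?_ ?_ ?_ ?_ fun k hk => ?_
    iterate 4
      · intro k hk
        simp only [mem_Icc, mem_Ico] at hk ⊢
        omega
    · rw [Nat.sub_sub_self ((mem_Icc.1 hk).2.trans (Nat.sub_le j 1)), zpow_neg_natCast_mul]
      ring
  rw [shiftedVal, shiftExcess, hsum, zpow_neg_natCast_mul]
  ring

theorem shifted_values_strict_mono_general
    (d L : ℕ) (hd : 1 ≤ d) (δ : ℝ) (hδ0 : 0 < δ) (hδ1 : δ < 1)
    (g : ℕ → ℝ) (hmono : ∀ j, 1 ≤ j → j < L → g j < g (j + 1))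
    (j : ℕ) (hj2 : 2 ≤ j) (hjL : j ≤ L) :
    shiftedVal δ d L g (j - 1) < shiftedVal δ d L g j := by
  obtain ⟨i, rfl⟩ : ∃ i, j = i + 1 := ⟨j - 1, by omega⟩
  have hi : 1 ≤ i := by omega
  set a := δ ^ (-(d : ℤ))
  set h := shiftExcess a (g L - g 1) g i
  have ha : 1 < a := one_lt_zpow_neg hδ0 hδ1 hd
  have hstep : g (i + 1) - g i < h := sub_lt_shiftExcess ha hmono hi (by omega)
  have hdiff : g (i + 1) + a * (h - (g (i + 1) - g i)) - (g i + h)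
      = (a - 1) * (h - (g (i + 1) - g i)) := by ring
  rw [Nat.add_sub_cancel, shiftedVal_eq_add_shiftExcess, shiftedVal_eq_add_shiftExcess,
    shiftExcess_succ _ _ _ hi]
  linarith [mul_pos (sub_pos.2 ha) (sub_pos.2 hstep)]

/-- Monotonicity of the shifted values: if `g₁ < g₂ < ⋯ < g_L` then `g̃_{j−1} < g̃_j` for
every `2 ≤ j ≤ L`. -/
theorem shifted_values_strict_mono
    (d L : ℕ) (hd : 1 ≤ d) (hL : 2 ≤ L) (δ : ℝ) (hδ0 : 0 < δ) (hδ1 : δ < 1)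
    (g : ℕ → ℝ) (hmono : ∀ j, 1 ≤ j → j < L → g j < g (j + 1))
    (j : ℕ) (hj2 : 2 ≤ j) (hjL : j ≤ L) :
    shiftedVal δ d L g (j - 1) < shiftedVal δ d L g j :=
  shifted_values_strict_mono_general d L hd δ hδ0 hδ1 g hmono j hj2 hjL
end

section
/- Let d ≥ 1, L ≥ 1 be integers, j ∈ {1,…,L}, δ ∈ (0, 1/2], and set J := L + 3Lδ^{−dL}. Let g ∈ ℝ^d satisfy: for every i, either g_i = j − 1 − J or g_i ∈ [j−1, j−δ], and g_{i₀} = j − 1 − J for at least one index i₀. Then Σ_{i=1}^{d} δ^{1−i} g_i < 0. -/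
/-!
Write `A = δ⁻¹ ≥ 2` and `P = A^{dL}`, so the weights are `A^i ≥ 1`. Every entry is at most `j`,
so the entries other than `g i₀` contribute at most `j · ∑_{i<d} A^i ≤ j (A^d - 1) ≤ L P - j`,
because `A ≥ 2` makes the geometric sum smaller than its next term. The out-of-range entry
`j - 1 - L - 3LP` is negative and its weight is at least `1`, so it contributes at most
`j - 1 - L - 3LP`, which outweighs everything else.
-/

open Finset

theorem geom_sum_le_pow_sub_one {R : Type*} [CommRing R] [LinearOrder R] [IsStrictOrderedRing R]
    {x : R} (hx : 2 ≤ x) (n : ℕ) : ∑ i ∈ range n, x ^ i ≤ x ^ n - 1 := by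
  have hsum : 0 ≤ ∑ i ∈ range n, x ^ i := sum_nonneg fun i _ => pow_nonneg (by linarith) i
  rw [← geom_sum_mul]
  nlinarith

theorem sum_mul_le_of_le_of_nonpos {ι R : Type*} [Fintype ι] [DecidableEq ι] [CommRing R]
    [LinearOrder R] [IsStrictOrderedRing R] {w g : ι → R} {c : R} {i₀ : ι}
    (hw : ∀ i, 1 ≤ w i) (hc : 0 ≤ c) (hg : ∀ i, g i ≤ c) (hi₀ : g i₀ ≤ 0) :
    ∑ i, w i * g i ≤ g i₀ + c * ∑ i, w i := by
  have hw₀ : ∀ i, 0 ≤ w i := fun i => zero_le_one.trans (hw i)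
  have hrest : ∑ i ∈ univ.erase i₀, w i * g i ≤ c * ∑ i ∈ univ.erase i₀, w i := by
    rw [mul_sum]
    exact sum_le_sum fun i _ => by nlinarith [hw₀ i, hg i]
  have hsum : c * ∑ i ∈ univ.erase i₀, w i ≤ c * ∑ i, w i :=
    mul_le_mul_of_nonneg_left (sum_le_sum_of_subset_of_nonneg (erase_subset _ _)
      fun i _ _ => hw₀ i) hc
  rw [← add_sum_erase _ _ (mem_univ i₀)]
  nlinarith [hw i₀]

theorem zpow_neg_natCast_eq_inv_pow {α : Type*} [DivisionMonoid α] (a : α) (n : ℕ) :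
    a ^ (-(n : ℤ)) = a⁻¹ ^ n := by
  rw [zpow_neg, zpow_natCast, inv_pow]

theorem out_of_range_column_has_negative_id_general
    (d L j : ℕ) (hL : 1 ≤ L) (hjL : j ≤ L)
    (δ : ℝ) (hδ0 : 0 < δ) (hδhalf : δ ≤ 1 / 2)
    (g : Fin d → ℝ)
    (hg : ∀ i, g i = (j : ℝ) - 1 - ((L : ℝ) + 3 * L * δ ^ (-((d * L : ℕ) : ℤ)))
        ∨ ((j : ℝ) - 1 ≤ g i ∧ g i ≤ (j : ℝ) - δ))
    (hex : ∃ i, g i = (j : ℝ) - 1 - ((L : ℝ) + 3 * L * δ ^ (-((d * L : ℕ) : ℤ)))) :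
    ∑ i, δ ^ (-(i.1 : ℤ)) * g i < 0 := by
  obtain ⟨i₀, hi₀⟩ := hex
  simp only [zpow_neg_natCast_eq_inv_pow] at hg hi₀ ⊢
  have hA : 2 ≤ δ⁻¹ := by rw [le_inv_comm₀ two_pos hδ0]; linarith
  have hjL' : (j : ℝ) ≤ L := by exact_mod_cast hjL
  have hP : δ⁻¹ ^ d ≤ δ⁻¹ ^ (d * L) :=
    pow_le_pow_right₀ (by linarith) (Nat.le_mul_of_pos_right d hL)
  have hLP : 0 ≤ (L : ℝ) * δ⁻¹ ^ (d * L) := by positivity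
  have hbad : g i₀ ≤ 0 := by rw [hi₀]; linarith
  have hle : ∀ i, g i ≤ j := fun i => by
    rcases hg i with h | h
    · rw [h, ← hi₀]; linarith [j.cast_nonneg (α := ℝ)]
    · linarith
  have hgeom : ∑ i : Fin d, δ⁻¹ ^ i.1 ≤ δ⁻¹ ^ d - 1 := by
    rw [Fin.sum_univ_eq_sum_range (δ⁻¹ ^ ·)]
    exact geom_sum_le_pow_sub_one hA d
  have hrest : (j : ℝ) * ∑ i : Fin d, δ⁻¹ ^ i.1 ≤ L * δ⁻¹ ^ (d * L) - j :=
    calc (j : ℝ) * ∑ i : Fin d, δ⁻¹ ^ i.1 ≤ j * (δ⁻¹ ^ d - 1) :=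
          mul_le_mul_of_nonneg_left hgeom j.cast_nonneg
      _ ≤ L * δ⁻¹ ^ (d * L) - j := by
          nlinarith [mul_le_mul_of_nonneg_right hjL' (by positivity : (0 : ℝ) ≤ δ⁻¹ ^ d),
            mul_le_mul_of_nonneg_left hP L.cast_nonneg]
  have hsum := sum_mul_le_of_le_of_nonpos (w := fun i : Fin d => δ⁻¹ ^ i.1)
    (fun i => one_le_pow₀ (by linarith)) j.cast_nonneg hle hbad
  linarith

/-- Any column containing an out-of-range entry `j − 1 − J` (with `J = L + 3Lδ^{−dL}`)
receives a negative column ID `Σ_i δ^{1−i} g_i < 0`. -/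
theorem out_of_range_column_has_negative_id
    (d L j : ℕ) (hd : 1 ≤ d) (hL : 1 ≤ L) (hj1 : 1 ≤ j) (hjL : j ≤ L)
    (δ : ℝ) (hδ0 : 0 < δ) (hδhalf : δ ≤ 1 / 2)
    (g : Fin d → ℝ)
    (hg : ∀ i, g i = (j : ℝ) - 1 - ((L : ℝ) + 3 * L * δ ^ (-((d * L : ℕ) : ℤ)))
        ∨ ((j : ℝ) - 1 ≤ g i ∧ g i ≤ (j : ℝ) - δ))
    (hex : ∃ i, g i = (j : ℝ) - 1 - ((L : ℝ) + 3 * L * δ ^ (-((d * L : ℕ) : ℤ)))) :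
    ∑ i, δ ^ (-(i.1 : ℤ)) * g i < 0 :=
  out_of_range_column_has_negative_id_general d L j hL hjL δ hδ0 hδhalf g hg hex
end

section
/- Let a₂, a₃, b₁, b₂, b₃, c₁, c₂ ∈ ℝ with c₁ < c₂, and let ζ : ℝ → ℝ be given by ζ(x) = b₁ for x < c₁, ζ(x) = a₂x + b₂ for c₁ ≤ x < c₂, and ζ(x) = a₃x + b₃ for x ≥ c₂. For ε ∈ (0, c₂ − c₁) define ζ̃(x) := b₁ + ((a₂c₁ + b₂ − b₁)/ε)·ReLU(x − c₁ + ε) + (a₂ − (a₂c₁ + b₂ − b₁)/ε)·ReLU(x − c₁) + ((a₃c₂ + b₃ − a₂(c₂ − ε) − b₂)/ε − a₂)·ReLU(x − c₂ + ε) + (a₃ − (a₃c₂ + b₃ − a₂(c₂ − ε) − b₂)/ε)·ReLU(x − c₂). Then ζ̃(x) = ζ(x) for every x ∉ [c₁ − ε, c₁) ∪ [c₂ − ε, c₂). -/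
/-!
A pair `s * ReLU(x - c + ε) + t * ReLU(x - c)` vanishes for `x ≤ c - ε` and equals the affine
function `s * ε + (s + t) * (x - c)` for `c ≤ x`. The first pair of ReLUs lifts `b₁` onto the line
`a₂ x + b₂` across `[c₁ - ε, c₁]`, the second lifts that line onto `a₃ x + b₃` across
`[c₂ - ε, c₂]`; outside these intervals the identity reduces to `(d / ε) * ε = d`.
-/

theorem relu_pair_eq_zero_of_le {s t c ε x : ℝ} (hε : 0 ≤ ε) (hx : x ≤ c - ε) :
    s * max (x - c + ε) 0 + t * max (x - c) 0 = 0 := by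
  rw [max_eq_right (by linarith), max_eq_right (by linarith)]
  ring

theorem relu_pair_eq_of_le {s t c ε x : ℝ} (hε : 0 ≤ ε) (hx : c ≤ x) :
    s * max (x - c + ε) 0 + t * max (x - c) 0 = s * ε + (s + t) * (x - c) := by
  rw [max_eq_left (by linarith), max_eq_left (by linarith)]
  ring

theorem four_relu_approximation_general
    (a₂ a₃ b₁ b₂ b₃ c₁ c₂ ε : ℝ) (hc : c₁ < c₂) (hε0 : 0 < ε)
    (x : ℝ)
    (hx : ¬ ((c₁ - ε ≤ x ∧ x < c₁) ∨ (c₂ - ε ≤ x ∧ x < c₂))) :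
    b₁ + ((a₂ * c₁ + b₂ - b₁) / ε) * max (x - c₁ + ε) 0
      + (a₂ - (a₂ * c₁ + b₂ - b₁) / ε) * max (x - c₁) 0
      + ((a₃ * c₂ + b₃ - a₂ * (c₂ - ε) - b₂) / ε - a₂) * max (x - c₂ + ε) 0
      + (a₃ - (a₃ * c₂ + b₃ - a₂ * (c₂ - ε) - b₂) / ε) * max (x - c₂) 0
    = if x < c₁ then b₁ else if x < c₂ then a₂ * x + b₂ else a₃ * x + b₃ := by
  push Not at hx
  obtain ⟨hx₁, hx₂⟩ := hx
  set s₁ := (a₂ * c₁ + b₂ - b₁) / ε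
  set s₂ := (a₃ * c₂ + b₃ - a₂ * (c₂ - ε) - b₂) / ε
  have hs₁ : s₁ * ε = a₂ * c₁ + b₂ - b₁ := div_mul_cancel₀ _ hε0.ne'
  have hs₂ : s₂ * ε = a₃ * c₂ + b₃ - a₂ * (c₂ - ε) - b₂ := div_mul_cancel₀ _ hε0.ne'
  split_ifs with h₁ h₂
  · have hx_le : x ≤ c₁ - ε := le_of_lt <| lt_of_not_ge fun h => h₁.not_ge (hx₁ h)
    linear_combination relu_pair_eq_zero_of_le (s := s₁) (t := a₂ - s₁) (c := c₁) hε0.le hx_le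
      + relu_pair_eq_zero_of_le (s := s₂ - a₂) (t := a₃ - s₂) (c := c₂) hε0.le (by linarith)
  · have hx_le : x ≤ c₂ - ε := le_of_lt <| lt_of_not_ge fun h => h₂.not_ge (hx₂ h)
    linear_combination relu_pair_eq_of_le (s := s₁) (t := a₂ - s₁) (c := c₁) hε0.le
        (not_lt.mp h₁)
      + relu_pair_eq_zero_of_le (s := s₂ - a₂) (t := a₃ - s₂) (c := c₂) hε0.le hx_le + hs₁
  · linear_combination relu_pair_eq_of_le (s := s₁) (t := a₂ - s₁) (c := c₁) hε0.le (by linarith)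
      + relu_pair_eq_of_le (s := s₂ - a₂) (t := a₃ - s₂) (c := c₂) hε0.le
        (not_lt.mp h₂) + hs₁ + hs₂

/-- The explicit combination of four ReLUs agrees with the three-piece piecewise-linear
activation `ζ` outside the two length-`ε` intervals preceding the breakpoints. -/
theorem four_relu_approximation
    (a₂ a₃ b₁ b₂ b₃ c₁ c₂ ε : ℝ) (hc : c₁ < c₂) (hε0 : 0 < ε) (hε : ε < c₂ - c₁)
    (x : ℝ)
    (hx : ¬ ((c₁ - ε ≤ x ∧ x < c₁) ∨ (c₂ - ε ≤ x ∧ x < c₂))) :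
    b₁ + ((a₂ * c₁ + b₂ - b₁) / ε) * max (x - c₁ + ε) 0
      + (a₂ - (a₂ * c₁ + b₂ - b₁) / ε) * max (x - c₁) 0
      + ((a₃ * c₂ + b₃ - a₂ * (c₂ - ε) - b₂) / ε - a₂) * max (x - c₂ + ε) 0
      + (a₃ - (a₃ * c₂ + b₃ - a₂ * (c₂ - ε) - b₂) / ε) * max (x - c₂) 0
    = if x < c₁ then b₁ else if x < c₂ then a₂ * x + b₂ else a₃ * x + b₃ :=
  four_relu_approximation_general a₂ a₃ b₁ b₂ b₃ c₁ c₂ ε hc hε0 x hx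
end

section
/- Let L, k₁, k₂ ≥ 1, ε₁, ε₂ ≥ 0, and let F, Q ∈ ℝ^{L×L}, U₁, V₁ ∈ ℝ^{L×k₁}, U₂, V₂ ∈ ℝ^{L×k₂} satisfy ‖U₁V₁ᵀ − F‖_max ≤ ε₁ and ‖U₂V₂ᵀ − Q‖_max ≤ ε₂. Let U₃ := U₁ • U₂ and V₃ := V₁ • V₂ be the row-wise Kronecker products (so U₃, V₃ ∈ ℝ^{L×k₁k₂}). Then ‖U₃V₃ᵀ − F ⊙ Q‖_max ≤ ‖U₁V₁ᵀ‖_max · ε₂ + ε₁ · ‖Q‖_max. -/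
open Matrix BigOperators

/-- Entrywise maximum norm of a matrix: `‖A‖_max = max_{i,j} |A i j|`. -/
noncomputable def maxNorm {m n : ℕ} (A : Matrix (Fin m) (Fin n) ℝ) : ℝ :=
  ⨆ p : Fin m × Fin n, |A p.1 p.2|

/-- Row-wise (face-splitting) Kronecker product. -/
def rowKron {L k₁ k₂ : ℕ} (U : Matrix (Fin L) (Fin k₁) ℝ) (V : Matrix (Fin L) (Fin k₂) ℝ) :
    Matrix (Fin L) (Fin k₁ × Fin k₂) ℝ :=
  Matrix.of fun j p => U j p.1 * V j p.2

/-!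
The `(i, j)` entry of `(U₁ • U₂)(V₁ • V₂)ᵀ` is the sum over pairs `(p, q)` of
`U₁ i p U₂ i q V₁ j p V₂ j q`, which factors as `(U₁V₁ᵀ) i j * (U₂V₂ᵀ) i j`. So the claim is the
perturbation bound for Hadamard products, obtained entrywise from
`ab - fq = a (b - q) + (a - f) q`.
-/

section MaxNorm

variable {m n : ℕ}

theorem abs_apply_le_maxNorm (A : Matrix (Fin m) (Fin n) ℝ) (i : Fin m) (j : Fin n) :
    |A i j| ≤ maxNorm A :=
  le_ciSup (Set.finite_range fun p : Fin m × Fin n => |A p.1 p.2|).bddAbove (i, j)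

theorem maxNorm_nonneg (A : Matrix (Fin m) (Fin n) ℝ) : 0 ≤ maxNorm A :=
  Real.iSup_nonneg fun _ => abs_nonneg _

-- `0 ≤ c` is needed when `m` or `n` is `0`: the empty supremum in `ℝ` is `0`.
theorem maxNorm_le {A : Matrix (Fin m) (Fin n) ℝ} {c : ℝ} (hc : 0 ≤ c)
    (h : ∀ i j, |A i j| ≤ c) : maxNorm A ≤ c :=
  Real.iSup_le (fun p => h p.1 p.2) hc

theorem maxNorm_hadamard_sub_hadamard_le (A B F Q : Matrix (Fin m) (Fin n) ℝ) :
    maxNorm (A ⊙ B - F ⊙ Q) ≤ maxNorm A * maxNorm (B - Q) + maxNorm (A - F) * maxNorm Q := by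
  refine maxNorm_le (add_nonneg (mul_nonneg (maxNorm_nonneg _) (maxNorm_nonneg _))
    (mul_nonneg (maxNorm_nonneg _) (maxNorm_nonneg _))) fun i j => ?_
  have split : (A ⊙ B - F ⊙ Q) i j = A i j * (B - Q) i j + (A - F) i j * Q i j := by
    simp only [Matrix.sub_apply, hadamard_apply]
    ring
  calc |(A ⊙ B - F ⊙ Q) i j|
      ≤ |A i j| * |(B - Q) i j| + |(A - F) i j| * |Q i j| := by
        rw [split, ← abs_mul, ← abs_mul]
        exact abs_add_le _ _
    _ ≤ maxNorm A * maxNorm (B - Q) + maxNorm (A - F) * maxNorm Q := by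
        gcongr <;> first | exact abs_apply_le_maxNorm _ _ _ | exact maxNorm_nonneg _

end MaxNorm

theorem rowKron_mul_rowKron_transpose {L M k₁ k₂ : ℕ}
    (U₁ : Matrix (Fin L) (Fin k₁) ℝ) (U₂ : Matrix (Fin L) (Fin k₂) ℝ)
    (V₁ : Matrix (Fin M) (Fin k₁) ℝ) (V₂ : Matrix (Fin M) (Fin k₂) ℝ) :
    rowKron U₁ U₂ * (rowKron V₁ V₂)ᵀ = (U₁ * V₁ᵀ) ⊙ (U₂ * V₂ᵀ) := by
  ext i j
  simp only [mul_apply, transpose_apply, rowKron, of_apply, hadamard_apply, Finset.sum_mul_sum,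
    ← Finset.univ_product_univ, Finset.sum_product]
  exact Finset.sum_congr rfl fun _ _ => Finset.sum_congr rfl fun _ _ => by ring

theorem rowKron_hadamard_approximation_general
    (L k₁ k₂ : ℕ)
    (ε₁ ε₂ : ℝ)
    (F Q : Matrix (Fin L) (Fin L) ℝ)
    (U₁ V₁ : Matrix (Fin L) (Fin k₁) ℝ) (U₂ V₂ : Matrix (Fin L) (Fin k₂) ℝ)
    (h₁ : maxNorm (U₁ * V₁ᵀ - F) ≤ ε₁) (h₂ : maxNorm (U₂ * V₂ᵀ - Q) ≤ ε₂) :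
    maxNorm (rowKron U₁ U₂ * (rowKron V₁ V₂)ᵀ - Matrix.hadamard F Q)
      ≤ maxNorm (U₁ * V₁ᵀ) * ε₂ + ε₁ * maxNorm Q := by
  rw [rowKron_mul_rowKron_transpose]
  calc maxNorm ((U₁ * V₁ᵀ) ⊙ (U₂ * V₂ᵀ) - F ⊙ Q)
      ≤ maxNorm (U₁ * V₁ᵀ) * maxNorm (U₂ * V₂ᵀ - Q) + maxNorm (U₁ * V₁ᵀ - F) * maxNorm Q :=
        maxNorm_hadamard_sub_hadamard_le _ _ _ _
    _ ≤ maxNorm (U₁ * V₁ᵀ) * ε₂ + ε₁ * maxNorm Q := by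
        gcongr <;> exact maxNorm_nonneg _

/-- Error bound for the low-rank approximation of a Hadamard product: if `U₁V₁ᵀ ≈ F` and
`U₂V₂ᵀ ≈ Q` entrywise, then `(U₁•U₂)(V₁•V₂)ᵀ ≈ F ⊙ Q` with error
`‖U₁V₁ᵀ‖_max ε₂ + ε₁ ‖Q‖_max`. -/
theorem rowKron_hadamard_approximation
    (L k₁ k₂ : ℕ) (hL : 1 ≤ L) (hk₁ : 1 ≤ k₁) (hk₂ : 1 ≤ k₂)
    (ε₁ ε₂ : ℝ) (hε₁ : 0 ≤ ε₁) (hε₂ : 0 ≤ ε₂)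
    (F Q : Matrix (Fin L) (Fin L) ℝ)
    (U₁ V₁ : Matrix (Fin L) (Fin k₁) ℝ) (U₂ V₂ : Matrix (Fin L) (Fin k₂) ℝ)
    (h₁ : maxNorm (U₁ * V₁ᵀ - F) ≤ ε₁) (h₂ : maxNorm (U₂ * V₂ᵀ - Q) ≤ ε₂) :
    maxNorm (rowKron U₁ U₂ * (rowKron V₁ V₂)ᵀ - Matrix.hadamard F Q)
      ≤ maxNorm (U₁ * V₁ᵀ) * ε₂ + ε₁ * maxNorm Q :=
  rowKron_hadamard_approximation_general L k₁ k₂ ε₁ ε₂ F Q U₁ V₁ U₂ V₂ h₁ h₂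
end
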